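/- Let n ≥ 3 and 1 ≤ k, ℓ < n/2. The characteristic polynomial of the I-graph I(n;k,ℓ) equals the product over j = 1,…,n of (x² − (2cos(2jkπ/n) + 2cos(2jℓπ/n))x + 4cos(2jkπ/n)cos(2jℓπ/n) − 1). -/

import Mathlib

/-!
The inverse discrete Fourier transform on `ZMod n` simultaneously diagonalises all circulant
matrices, the eigenvalue of `circulant f` at the frequency `j` being `𝓕 f j`; for the circulant
`C_n(k)` this is `2 cos (2πjk/n)`. The identity blocks of `x - I(n;k,ℓ)` commute with everything,
so its determinant is `det ((x - C_n(k)) (x - C_n(ℓ)) - 1)`, and diagonalising both circulants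
by the same Fourier matrix turns this into the product of the scalar factors.
-/

open Matrix Real Finset

/-- Adjacency matrix of the circulant graph `C_n(k)` on `ZMod n`,
with edges `{u, u ± k}`, over `ℝ`. -/
def circulantAdjR (n k : ℕ) [NeZero n] : Matrix (ZMod n) (ZMod n) ℝ :=
  fun u v => if v = u + (k : ZMod n) ∨ v = u - (k : ZMod n) then 1 else 0

/-- Adjacency matrix of the I-graph `I(n; k, l)`. -/
def IGraphAdj (n k l : ℕ) [NeZero n] :
    Matrix (ZMod n ⊕ ZMod n) (ZMod n ⊕ ZMod n) ℝ :=
  Matrix.fromBlocks (circulantAdjR n k) 1 1 (circulantAdjR n l)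

namespace Matrix

variable {m R : Type*} [Fintype m] [DecidableEq m] [CommRing R]

theorem det_fromBlocks_neg_one_neg_one (A D : Matrix m m R) :
    (fromBlocks A (-1) (-1) D).det = (A * D - 1).det := by
  have hJ : (J m R).det = 1 := SymplecticGroup.det_eq_one (SymplecticGroup.J_mem m R)
  have hprod : J m R * fromBlocks 1 A 0 1 * fromBlocks A (-1) (-1) D
      = fromBlocks 1 (-D) 0 (A * D - 1) := by
    simp [J, fromBlocks_multiply, sub_eq_add_neg, add_comm]
  have := congrArg det hprod
  rwa [det_mul, det_mul, hJ, det_fromBlocks_zero₂₁, det_fromBlocks_zero₂₁, det_one, one_mul,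
    one_mul, one_mul, one_mul] at this

theorem det_eq_prod_of_mul_eq_mul_diagonal {M P : Matrix m m R} {d : m → R}
    (hP : IsUnit P.det) (h : M * P = P * diagonal d) : M.det = ∏ i, d i := by
  have := congrArg det h
  rw [det_mul, det_mul, det_diagonal, mul_comm] at this
  exact hP.mul_left_cancel this

theorem smul_one_sub_mul_eq_mul_diagonal {A P : Matrix m m R} {a : m → R}
    (h : A * P = P * diagonal a) (x : R) :
    (x • 1 - A) * P = P * diagonal (fun i => x - a i) := by
  rw [sub_mul, h, smul_one_mul, ← diagonal_sub, mul_sub, ← smul_one_eq_diagonal,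
    Matrix.mul_smul, Matrix.mul_one]

theorem mul_sub_one_mul_eq_mul_diagonal {A B P : Matrix m m R} {a b : m → R}
    (hA : A * P = P * diagonal a) (hB : B * P = P * diagonal b) :
    (A * B - 1) * P = P * diagonal (fun i => a i * b i - 1) := by
  calc (A * B - 1) * P = P * diagonal (fun i => a i * b i) - P * diagonal 1 := by
        rw [sub_mul, Matrix.mul_assoc, hB, ← Matrix.mul_assoc, hA, Matrix.mul_assoc,
          diagonal_mul_diagonal, Matrix.one_mul]
        simp
    _ = P * diagonal (fun i => a i * b i - 1) := by rw [← mul_sub, diagonal_sub]; rfl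

end Matrix

namespace ZMod

open scoped ZMod

theorem neg_natCast_ne_self {n k : ℕ} (hk : 1 ≤ k) (hk' : 2 * k < n) : -(k : ZMod n) ≠ k := by
  intro h
  have h2k : ((2 * k : ℕ) : ZMod n) = 0 := by
    push_cast
    linear_combination -h
  rw [ZMod.natCast_eq_zero_iff] at h2k
  exact absurd (Nat.le_of_dvd (by omega) h2k) (by omega)

variable {n : ℕ} [NeZero n]

variable (n) in
noncomputable def invDFTMatrix : Matrix (ZMod n) (ZMod n) ℂ :=
  LinearMap.toMatrix' (𝓕⁻ : (ZMod n → ℂ) ≃ₗ[ℂ] (ZMod n → ℂ)).toLinearMap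

theorem invDFTMatrix_apply (i j : ZMod n) :
    invDFTMatrix n i j = (n : ℂ)⁻¹ * stdAddChar (j * i) := by
  simp [invDFTMatrix, LinearMap.toMatrix'_apply, invDFT_apply, Pi.single_apply]

theorem isUnit_det_invDFTMatrix : IsUnit (invDFTMatrix n).det := by
  rw [invDFTMatrix, LinearMap.det_toMatrix']
  exact LinearEquiv.isUnit_det' _

theorem circulant_mul_invDFTMatrix (f : ZMod n → ℂ) :
    circulant f * invDFTMatrix n = invDFTMatrix n * diagonal (𝓕 f) := by
  ext i j
  rw [mul_diagonal, mul_apply, invDFTMatrix_apply, dft_apply, Finset.mul_sum]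
  refine Fintype.sum_equiv (Equiv.subLeft i) _ _ fun s => ?_
  have hchar : stdAddChar (j * s) = stdAddChar (j * i) * stdAddChar (-((i - s) * j)) := by
    rw [← AddChar.map_add_eq_mul]
    ring_nf
  rw [Equiv.subLeft_apply, circulant_apply, invDFTMatrix_apply, smul_eq_mul, hchar]
  ring

theorem stdAddChar_add_stdAddChar_neg_natCast (m : ℕ) :
    stdAddChar (m : ZMod n) + stdAddChar (-(m : ZMod n)) = 2 * Real.cos (2 * π * m / n) := by
  have hpos : ((m : ℤ) : ZMod n) = m := Int.cast_natCast m
  have hneg : ((-m : ℤ) : ZMod n) = -m := by push_cast; rfl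
  rw [← hneg, ← hpos, stdAddChar_coe, stdAddChar_coe]
  push_cast
  rw [Complex.two_cos]
  congr 2 <;> ring

variable (n) in
def plusMinusIndicator (k : ℕ) : ZMod n → ℂ := fun t => if t = -k ∨ t = k then 1 else 0

theorem dft_plusMinusIndicator_natCast {k : ℕ} (hk : 1 ≤ k) (hk' : 2 * k < n) (j : ℕ) :
    𝓕 (plusMinusIndicator n k) j = 2 * Real.cos (2 * j * k * π / n) := by
  have hmem (t : ZMod n) : (t = -k ∨ t = k) ↔ t ∈ ({-(k : ZMod n), ↑k} : Finset _) := by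
    simp
  simp only [dft_apply, plusMinusIndicator, hmem, smul_eq_mul, mul_ite, mul_one, mul_zero]
  rw [sum_ite_mem, univ_inter, sum_pair (neg_natCast_ne_self hk hk'), neg_mul, neg_neg,
    ← Nat.cast_mul, stdAddChar_add_stdAddChar_neg_natCast]
  push_cast
  ring_nf

theorem prod_Icc_one_natCast {M : Type*} [CommMonoid M] (g : ZMod n → M) :
    ∏ i ∈ Icc 1 n, g i = ∏ j, g j := by
  refine prod_nbij (fun i => (i : ZMod n)) (fun _ _ => mem_univ _) ?_ ?_ fun _ _ => rfl
  · intro a ha b hb hab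
    simp only [coe_Icc, Set.mem_Icc] at ha hb
    exact ((ZMod.natCast_eq_natCast_iff _ _ _).mp hab).eq_of_abs_lt (by rw [abs_lt]; omega)
  · intro j _
    refine ⟨if j = 0 then n else j.val, ?_, ?_⟩
    · rw [coe_Icc, Set.mem_Icc]
      split_ifs with hj
      · exact ⟨NeZero.one_le, le_rfl⟩
      · exact ⟨Nat.one_le_iff_ne_zero.mpr ((ZMod.val_ne_zero j).mpr hj), j.val_lt.le⟩
    · split_ifs with hj <;> simp [hj]

end ZMod

theorem circulantAdjR_map_ofReal (n k : ℕ) [NeZero n] :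
    (circulantAdjR n k).map Complex.ofReal = circulant (ZMod.plusMinusIndicator n k) := by
  ext u v
  have hiff : (v = u + k ∨ v = u - k) ↔ (u - v = -k ∨ u - v = k) := by
    constructor <;> rintro (h | h) <;> [left; right; left; right] <;> linear_combination -h
  simp only [map_apply, circulantAdjR, circulant_apply, ZMod.plusMinusIndicator, hiff]
  split_ifs <;> simp

theorem IGraphAdj_map_ofReal_smul_one_sub (n k l : ℕ) [NeZero n] (x : ℝ) :
    (x • (1 : Matrix (ZMod n ⊕ ZMod n) (ZMod n ⊕ ZMod n) ℝ) - IGraphAdj n k l).map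
        Complex.ofReal
      = fromBlocks ((x : ℂ) • 1 - circulant (ZMod.plusMinusIndicator n k)) (-1) (-1)
          ((x : ℂ) • 1 - circulant (ZMod.plusMinusIndicator n l)) := by
  rw [← circulantAdjR_map_ofReal, ← circulantAdjR_map_ofReal]
  ext (i | i) (j | j) <;> by_cases h : i = j <;> simp [IGraphAdj, one_apply, h]

theorem IGraph_charpoly_general (n k l : ℕ) [NeZero n]
    (hk : 1 ≤ k) (hk' : 2 * k < n) (hl : 1 ≤ l) (hl' : 2 * l < n) (x : ℝ) :
    (x • (1 : Matrix (ZMod n ⊕ ZMod n) (ZMod n ⊕ ZMod n) ℝ) - IGraphAdj n k l).det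
      = ∏ j ∈ Finset.Icc 1 n,
          (x ^ 2 - (2 * Real.cos (2 * j * k * Real.pi / n)
              + 2 * Real.cos (2 * j * l * Real.pi / n)) * x
            + 4 * Real.cos (2 * j * k * Real.pi / n) * Real.cos (2 * j * l * Real.pi / n)
            - 1) := by
  have hA := smul_one_sub_mul_eq_mul_diagonal
    (ZMod.circulant_mul_invDFTMatrix (ZMod.plusMinusIndicator n k)) (x : ℂ)
  have hB := smul_one_sub_mul_eq_mul_diagonal
    (ZMod.circulant_mul_invDFTMatrix (ZMod.plusMinusIndicator n l)) (x : ℂ)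
  have hdet : (((x • 1 - IGraphAdj n k l).det : ℝ) : ℂ)
      = ((x • 1 - IGraphAdj n k l).map Complex.ofReal).det :=
    RingHom.map_det Complex.ofRealHom _
  apply Complex.ofReal_injective
  rw [Complex.ofReal_prod, hdet, IGraphAdj_map_ofReal_smul_one_sub,
    det_fromBlocks_neg_one_neg_one, det_eq_prod_of_mul_eq_mul_diagonal
      ZMod.isUnit_det_invDFTMatrix (mul_sub_one_mul_eq_mul_diagonal hA hB),
    ← ZMod.prod_Icc_one_natCast]
  refine prod_congr rfl fun j _ => ?_
  rw [ZMod.dft_plusMinusIndicator_natCast hk hk', ZMod.dft_plusMinusIndicator_natCast hl hl']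
  push_cast
  ring

theorem IGraph_charpoly (n k l : ℕ) [NeZero n] (hn : 3 ≤ n)
    (hk : 1 ≤ k) (hk' : 2 * k < n) (hl : 1 ≤ l) (hl' : 2 * l < n) (x : ℝ) :
    (x • (1 : Matrix (ZMod n ⊕ ZMod n) (ZMod n ⊕ ZMod n) ℝ) - IGraphAdj n k l).det
      = ∏ j ∈ Finset.Icc 1 n,
          (x ^ 2 - (2 * Real.cos (2 * j * k * Real.pi / n)
              + 2 * Real.cos (2 * j * l * Real.pi / n)) * x
            + 4 * Real.cos (2 * j * k * Real.pi / n) * Real.cos (2 * j * l * Real.pi / n)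
            - 1) :=
  IGraph_charpoly_general n k l hk hk' hl hl' x
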